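/- arXiv:0809.2554 — 2 statements merged into one kernel-verified Lean document; each statement's English description precedes it below -/
import Mathlib

section
/- Let (V,d) be a finite metric space with facility opening costs fac : V → ℝ_{≥0}, and let F ⊆ V be nonempty. Suppose F is locally optimal for UFL under opening, closing, and swapping moves: for every f' ∈ V, UFL(F ∪ {f'}) ≥ UFL(F); for every r ∈ F with F \ {r} nonempty, UFL(F \ {r}) ≥ UFL(F); and for every r ∈ F and f' ∈ V, UFL((F \ {r}) ∪ {f'}) ≥ UFL(F). Then for every nonempty F* ⊆ V, UFL(F) ≤ 2·fac(F*) + 3·Σ_{j ∈ V} d(j,F*) ≤ 3·UFL(F*). -/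
open Finset

/-- Distance from a client `j` to a nonempty facility set `F`: `min_{f ∈ F} d(j,f)`. -/
noncomputable def distSet {V : Type*} [MetricSpace V] (j : V) (F : Finset V)
    (hF : F.Nonempty) : ℝ :=
  F.inf' hF fun f => dist j f

/-- The uncapacitated facility location cost of a nonempty facility set `F`:
`UFL(F) = ∑_{f ∈ F} fac(f) + ∑_{j ∈ V} d(j,F)`. -/
noncomputable def UFL {V : Type*} [MetricSpace V] [Fintype V] (fac : V → ℝ)
    (F : Finset V) (hF : F.Nonempty) : ℝ :=
  (∑ f ∈ F, fac f) + ∑ j : V, distSet j F hF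

lemma distSet_le {V : Type*} [MetricSpace V] (j : V) (F : Finset V) (hF : F.Nonempty)
    {f : V} (hf : f ∈ F) : distSet j F hF ≤ dist j f :=
  Finset.inf'_le _ hf

/-- At a local optimum for UFL under opening, closing, and swapping moves,
`UFL(F) ≤ 2·fac(F*) + 3·∑_j d(j,F*) ≤ 3·UFL(F*)`. -/
theorem ufl_local_opt_three {V : Type*} [MetricSpace V] [Fintype V] [DecidableEq V]
    (fac : V → ℝ) (hfac : ∀ f : V, 0 ≤ fac f)
    (F : Finset V) (hF : F.Nonempty)
    (hopen : ∀ f' : V, UFL fac (insert f' F) (insert_nonempty _ _) ≥ UFL fac F hF)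
    (hclose : ∀ r ∈ F, ∀ hne : (F.erase r).Nonempty,
      UFL fac (F.erase r) hne ≥ UFL fac F hF)
    (hswap : ∀ r ∈ F, ∀ f' : V,
      UFL fac (insert f' (F.erase r)) (insert_nonempty _ _) ≥ UFL fac F hF) :
    ∀ (Fstar : Finset V) (hFstar : Fstar.Nonempty),
      UFL fac F hF ≤ 2 * (∑ f ∈ Fstar, fac f) + 3 * ∑ j : V, distSet j Fstar hFstar ∧
      2 * (∑ f ∈ Fstar, fac f) + 3 * ∑ j : V, distSet j Fstar hFstar ≤
        3 * UFL fac Fstar hFstar := by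
  intro Fstar hFstar
  classical
  -- nearest facility in F and in Fstar
  choose σF hσF hdF using fun j : V => F.exists_mem_eq_inf' hF (fun f => dist j f)
  choose σO hσO hdO using fun j : V => Fstar.exists_mem_eq_inf' hFstar (fun f => dist j f)
  have hdF' : ∀ j : V, distSet j F hF = dist j (σF j) := hdF
  have hdO' : ∀ j : V, distSet j Fstar hFstar = dist j (σO j) := hdO
  have dF0 : ∀ j : V, 0 ≤ distSet j F hF := fun j => (hdF' j) ▸ dist_nonneg
  have dO0 : ∀ j : V, 0 ≤ distSet j Fstar hFstar := fun j => (hdO' j) ▸ dist_nonneg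
  -- the "add" inequality
  have add_ineq : ∀ (o : V) (A : Finset V),
      ∑ j ∈ A, (distSet j F hF - dist j o) ≤ fac o := by
    intro o A
    have h := hopen o
    simp only [UFL, ge_iff_le] at h
    have hins : ∀ j : V, distSet j (insert o F) (insert_nonempty o F) ≤ distSet j F hF := by
      intro j
      rw [hdF' j]
      exact Finset.inf'_le _ (mem_insert_of_mem (hσF j))
    have hins2 : ∀ j : V, distSet j (insert o F) (insert_nonempty o F) ≤ dist j o :=
      fun j => Finset.inf'_le _ (mem_insert_self o F)
    have hfacsum : ∑ f ∈ insert o F, fac f ≤ fac o + ∑ f ∈ F, fac f := by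
      by_cases ho : o ∈ F
      · rw [Finset.insert_eq_self.mpr ho]
        linarith [hfac o]
      · rw [Finset.sum_insert ho]
    have h2 : ∑ j : V, (distSet j F hF - distSet j (insert o F) (insert_nonempty o F))
        ≤ fac o := by
      rw [Finset.sum_sub_distrib]
      linarith
    calc ∑ j ∈ A, (distSet j F hF - dist j o)
        ≤ ∑ j ∈ A, (distSet j F hF - distSet j (insert o F) (insert_nonempty o F)) :=
          Finset.sum_le_sum fun j _ => by linarith [hins2 j]
      _ ≤ ∑ j : V, (distSet j F hF - distSet j (insert o F) (insert_nonempty o F)) :=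
          Finset.sum_le_sum_of_subset_of_nonneg (subset_univ A)
            (fun j _ _ => by linarith [hins j])
      _ ≤ fac o := h2
  -- the "swap" inequality
  have swap_ineq : ∀ s ∈ F, ∀ (t : V) (ρ : V → V),
      (∀ j : V, ρ j ∈ insert t (F.erase s)) →
      fac s + ∑ j : V, (distSet j F hF - dist j (ρ j)) ≤ fac t := by
    intro s hs t ρ hρ
    have h := hswap s hs t
    simp only [UFL, ge_iff_le] at h
    have hfacsum : ∑ f ∈ insert t (F.erase s), fac f ≤ fac t + (∑ f ∈ F, fac f - fac s) := by
      rw [← Finset.sum_erase_eq_sub hs]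
      by_cases ht : t ∈ F.erase s
      · rw [Finset.insert_eq_self.mpr ht]
        linarith [hfac t]
      · rw [Finset.sum_insert ht]
    have hd : ∀ j : V, distSet j (insert t (F.erase s)) (insert_nonempty _ _) ≤ dist j (ρ j) :=
      fun j => Finset.inf'_le _ (hρ j)
    have hsum : ∑ j : V, distSet j (insert t (F.erase s)) (insert_nonempty _ _)
        ≤ ∑ j : V, dist j (ρ j) := Finset.sum_le_sum fun j _ => hd j
    rw [Finset.sum_sub_distrib]
    linarith
  -- the "delete" inequality
  have del_ineq : ∀ s ∈ F, ∀ hne : (F.erase s).Nonempty, ∀ ρ : V → V,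
      (∀ j : V, ρ j ∈ F.erase s) →
      fac s + ∑ j : V, (distSet j F hF - dist j (ρ j)) ≤ 0 := by
    intro s hs hne ρ hρ
    have h := hclose s hs hne
    simp only [UFL, ge_iff_le] at h
    have hfacsum : ∑ f ∈ F.erase s, fac f = ∑ f ∈ F, fac f - fac s :=
      Finset.sum_erase_eq_sub hs
    have hsum : ∑ j : V, distSet j (F.erase s) hne ≤ ∑ j : V, dist j (ρ j) :=
      Finset.sum_le_sum fun j _ => Finset.inf'_le _ (hρ j)
    rw [Finset.sum_sub_distrib]
    linarith
  -- choice of the nearest optimal facility pointing at s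
  have hτex : ∀ s : V, ∃ t : V, (Fstar.filter (fun o => σF o = s)).Nonempty →
      (t ∈ Fstar ∧ σF t = s ∧ ∀ o ∈ Fstar, σF o = s → dist s t ≤ dist s o) := by
    intro s
    by_cases hQ : (Fstar.filter (fun o => σF o = s)).Nonempty
    · obtain ⟨t, htmem, htinf⟩ :=
        (Fstar.filter (fun o => σF o = s)).exists_mem_eq_inf' hQ (fun o => dist s o)
      simp only [mem_filter] at htmem
      refine ⟨t, fun _ => ⟨htmem.1, htmem.2, fun o ho hos => ?_⟩⟩
      have hmem : o ∈ Fstar.filter (fun o => σF o = s) := mem_filter.mpr ⟨ho, hos⟩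
      calc dist s t = _ := htinf.symm
        _ ≤ dist s o := Finset.inf'_le _ hmem
    · exact ⟨s, fun h => absurd h hQ⟩
  choose τ hτ using hτex
  -- the per-client cost bound
  set B : V → ℝ := fun j =>
    if σF (σO j) = σF j then
      (if τ (σF j) = σO j then distSet j Fstar hFstar - distSet j F hF
       else distSet (σO j) F hF)
    else distSet j Fstar hFstar + distSet (σO j) F hF - distSet j F hF with hB
  -- per-facility bound from swap/delete moves
  have per_s : ∀ s ∈ F, fac s ≤
      (if (Fstar.filter (fun o => σF o = s)).Nonempty then fac (τ s) else 0)
      + ∑ j ∈ univ.filter (fun j => σF j = s), B j := by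
    intro s hs
    by_cases hQ : (Fstar.filter (fun o => σF o = s)).Nonempty
    · obtain ⟨hτ1, hτ2, hτ3⟩ := hτ s hQ
      set ρ : V → V := fun j =>
        if σF j = s then (if σF (σO j) = σF j then τ s else σF (σO j)) else σF j with hρdef
      have hρmem : ∀ j : V, ρ j ∈ insert (τ s) (F.erase s) := by
        intro j
        by_cases h1 : σF j = s
        · by_cases h2 : σF (σO j) = σF j
          · simp only [hρdef, if_pos h1, if_pos h2]
            exact mem_insert_self _ _
          · simp only [hρdef, if_pos h1, if_neg h2]
            exact mem_insert_of_mem (mem_erase.mpr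
              ⟨fun he => h2 (he.trans h1.symm), hσF (σO j)⟩)
        · simp only [hρdef, if_neg h1]
          exact mem_insert_of_mem (mem_erase.mpr ⟨h1, hσF j⟩)
      have hkey := swap_ineq s hs (τ s) ρ hρmem
      rw [if_pos hQ]
      have hzero : ∑ j ∈ univ.filter (fun j => ¬ σF j = s),
          (dist j (ρ j) - distSet j F hF) = 0 := by
        apply Finset.sum_eq_zero
        intro j hj
        simp only [mem_filter] at hj
        simp only [hρdef, if_neg hj.2]
        rw [hdF' j]
        ring
      have hptwise : ∀ j ∈ univ.filter (fun j => σF j = s),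
          dist j (ρ j) - distSet j F hF ≤ B j := by
        intro j hj
        simp only [mem_filter] at hj
        have h1 := hj.2
        by_cases h2 : σF (σO j) = σF j
        · have hρj : ρ j = τ s := by simp only [hρdef, if_pos h1, if_pos h2]
          have hBj : B j = if τ (σF j) = σO j then
              distSet j Fstar hFstar - distSet j F hF else distSet (σO j) F hF := by
            simp only [hB]
            rw [if_pos h2]
          rw [hρj, hBj]
          by_cases h3 : τ (σF j) = σO j
          · rw [if_pos h3]
            have h3' : τ s = σO j := by rw [← h1]; exact h3
            rw [h3', ← hdO' j]
          · rw [if_neg h3]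
            have t1 : dist j (τ s) ≤ dist j s + dist s (τ s) := dist_triangle j s (τ s)
            have t2 : dist s (τ s) ≤ dist s (σO j) :=
              hτ3 (σO j) (hσO j) (h2.trans h1)
            have t3 : dist s (σO j) = distSet (σO j) F hF := by
              rw [hdF' (σO j), h2, h1, dist_comm]
            have t4 : dist j s = distSet j F hF := by rw [hdF' j, h1]
            linarith
        · have hρj : ρ j = σF (σO j) := by simp only [hρdef, if_pos h1, if_neg h2]
          have hBj : B j = distSet j Fstar hFstar + distSet (σO j) F hF
              - distSet j F hF := by
            simp only [hB]
            rw [if_neg h2]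
          rw [hρj, hBj]
          have t1 : dist j (σF (σO j)) ≤ dist j (σO j) + dist (σO j) (σF (σO j)) :=
            dist_triangle _ _ _
          rw [← hdO' j, ← hdF' (σO j)] at t1
          linarith
      have hsum : ∑ j : V, (dist j (ρ j) - distSet j F hF)
          ≤ ∑ j ∈ univ.filter (fun j => σF j = s), B j := by
        rw [← Finset.sum_filter_add_sum_filter_not univ (fun j => σF j = s)
          (fun j => dist j (ρ j) - distSet j F hF), hzero, add_zero]
        exact Finset.sum_le_sum hptwise
      have hneg : ∑ j : V, (distSet j F hF - dist j (ρ j))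
          = - ∑ j : V, (dist j (ρ j) - distSet j F hF) := by
        rw [Finset.sum_sub_distrib, Finset.sum_sub_distrib]
        ring
      rw [hneg] at hkey
      linarith
    · have hallgood : ∀ j : V, σF j = s → σF (σO j) ≠ s := fun j h1 he =>
        hQ ⟨σO j, mem_filter.mpr ⟨hσO j, he⟩⟩
      have hne : (F.erase s).Nonempty := by
        obtain ⟨o₀, ho₀⟩ := hFstar
        have h0 : σF o₀ ≠ s := fun he => hQ ⟨o₀, mem_filter.mpr ⟨ho₀, he⟩⟩
        exact ⟨σF o₀, mem_erase.mpr ⟨h0, hσF o₀⟩⟩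
      set ρ : V → V := fun j => if σF j = s then σF (σO j) else σF j with hρdef
      have hρmem : ∀ j : V, ρ j ∈ F.erase s := by
        intro j
        by_cases h1 : σF j = s
        · simp only [hρdef, if_pos h1]
          exact mem_erase.mpr ⟨hallgood j h1, hσF (σO j)⟩
        · simp only [hρdef, if_neg h1]
          exact mem_erase.mpr ⟨h1, hσF j⟩
      have hkey := del_ineq s hs hne ρ hρmem
      rw [if_neg hQ]
      have hzero : ∑ j ∈ univ.filter (fun j => ¬ σF j = s),
          (dist j (ρ j) - distSet j F hF) = 0 := by
        apply Finset.sum_eq_zero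
        intro j hj
        simp only [mem_filter] at hj
        simp only [hρdef, if_neg hj.2]
        rw [hdF' j]
        ring
      have hptwise : ∀ j ∈ univ.filter (fun j => σF j = s),
          dist j (ρ j) - distSet j F hF ≤ B j := by
        intro j hj
        simp only [mem_filter] at hj
        have h1 := hj.2
        have h2 : ¬ σF (σO j) = σF j := fun he => hallgood j h1 (he.trans h1)
        have hρj : ρ j = σF (σO j) := by simp only [hρdef, if_pos h1]
        have hBj : B j = distSet j Fstar hFstar + distSet (σO j) F hF
            - distSet j F hF := by
          simp only [hB]
          rw [if_neg h2]
        rw [hρj, hBj]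
        have t1 : dist j (σF (σO j)) ≤ dist j (σO j) + dist (σO j) (σF (σO j)) :=
          dist_triangle _ _ _
        rw [← hdO' j, ← hdF' (σO j)] at t1
        linarith
      have hsum : ∑ j : V, (dist j (ρ j) - distSet j F hF)
          ≤ ∑ j ∈ univ.filter (fun j => σF j = s), B j := by
        rw [← Finset.sum_filter_add_sum_filter_not univ (fun j => σF j = s)
          (fun j => dist j (ρ j) - distSet j F hF), hzero, add_zero]
        exact Finset.sum_le_sum hptwise
      have hneg : ∑ j : V, (distSet j F hF - dist j (ρ j))
          = - ∑ j : V, (dist j (ρ j) - distSet j F hF) := by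
        rw [Finset.sum_sub_distrib, Finset.sum_sub_distrib]
        ring
      rw [hneg] at hkey
      linarith
  -- sum the per-facility bounds over s ∈ F
  have total_f : ∑ s ∈ F, fac s ≤
      (∑ s ∈ F, if (Fstar.filter (fun o => σF o = s)).Nonempty then fac (τ s) else 0)
      + ∑ j : V, B j := by
    have h1 : ∑ s ∈ F, fac s ≤ ∑ s ∈ F,
        ((if (Fstar.filter (fun o => σF o = s)).Nonempty then fac (τ s) else 0)
        + ∑ j ∈ univ.filter (fun j => σF j = s), B j) := Finset.sum_le_sum per_s
    rw [Finset.sum_add_distrib,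
      Finset.sum_fiberwise_of_maps_to (fun j _ => hσF j) B] at h1
    exact h1
  -- the chosen sum is a sum over a subset of Fstar
  have hinj : ∀ x ∈ F.filter (fun s => (Fstar.filter (fun o => σF o = s)).Nonempty),
      ∀ y ∈ F.filter (fun s => (Fstar.filter (fun o => σF o = s)).Nonempty),
      τ x = τ y → x = y := by
    intro x hx y hy hxy
    simp only [mem_filter] at hx hy
    have h1 := (hτ x hx.2).2.1
    have h2 := (hτ y hy.2).2.1
    rw [← h1, hxy, h2]
  have himg : (F.filter (fun s => (Fstar.filter (fun o => σF o = s)).Nonempty)).image τ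
      = Fstar.filter (fun o => τ (σF o) = o) := by
    ext o
    simp only [mem_image, mem_filter]
    constructor
    · rintro ⟨s, hsmem, rfl⟩
      obtain ⟨h1, h2, _⟩ := hτ s hsmem.2
      exact ⟨h1, by rw [h2]⟩
    · rintro ⟨hoFs, hfix⟩
      exact ⟨σF o, ⟨hσF o, ⟨o, mem_filter.mpr ⟨hoFs, rfl⟩⟩⟩, hfix⟩
  have chosen_eq : (∑ s ∈ F, if (Fstar.filter (fun o => σF o = s)).Nonempty
      then fac (τ s) else 0)
      = ∑ o ∈ Fstar.filter (fun o => τ (σF o) = o), fac o := by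
    rw [← Finset.sum_filter, ← Finset.sum_image hinj, himg]
  -- per-fiber bound on the client sums
  have perfiber : ∀ o ∈ Fstar, ∑ j ∈ univ.filter (fun j => σO j = o), B j ≤
      (if τ (σF o) = o then 0 else fac o)
      + ∑ j ∈ univ.filter (fun j => σO j = o), 2 * distSet j Fstar hFstar := by
    intro o ho
    have hgood : ∀ j ∈ univ.filter (fun j => σO j = o), ¬ σF (σO j) = σF j →
        B j ≤ 2 * distSet j Fstar hFstar := by
      intro j hj h2
      have hjo : σO j = o := (mem_filter.mp hj).2
      have hBj : B j = distSet j Fstar hFstar + distSet (σO j) F hF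
          - distSet j F hF := by
        simp only [hB]
        rw [if_neg h2]
      rw [hBj, hjo]
      have t1 : distSet o F hF ≤ dist o (σF j) := distSet_le o F hF (hσF j)
      have t2 : dist o (σF j) ≤ dist o j + dist j (σF j) := dist_triangle _ _ _
      have t3 : dist o j = distSet j Fstar hFstar := by
        rw [hdO' j, hjo, dist_comm]
      have t4 : dist j (σF j) = distSet j F hF := (hdF' j).symm
      linarith
    by_cases hch : τ (σF o) = o
    · rw [if_pos hch, zero_add]
      apply Finset.sum_le_sum
      intro j hj
      by_cases h2 : σF (σO j) = σF j
      · have hjo : σO j = o := (mem_filter.mp hj).2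
        have h3 : τ (σF j) = σO j := by rw [← h2, hjo, hch]
        have hBj : B j = distSet j Fstar hFstar - distSet j F hF := by
          simp only [hB]
          rw [if_pos h2, if_pos h3]
        rw [hBj]
        linarith [dF0 j, dO0 j]
      · exact hgood j hj h2
    · rw [if_neg hch, ← Finset.sum_filter_add_sum_filter_not
        (univ.filter (fun j => σO j = o)) (fun j => σF (σO j) = σF j) B]
      have hpt : ∀ j ∈ (univ.filter (fun j => σO j = o)).filter
          (fun j => σF (σO j) = σF j),
          B j ≤ 2 * distSet j Fstar hFstar + (distSet j F hF - dist j o) := by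
        intro j hj
        simp only [mem_filter] at hj
        have hjo : σO j = o := hj.1.2
        have h2 : σF (σO j) = σF j := hj.2
        have h3 : ¬ τ (σF j) = σO j := by
          rw [← h2, hjo]
          exact hch
        have hBj : B j = distSet (σO j) F hF := by
          simp only [hB]
          rw [if_pos h2, if_neg h3]
        rw [hBj, hjo]
        have t1 : distSet o F hF ≤ dist o (σF j) := distSet_le o F hF (hσF j)
        have t2 : dist o (σF j) ≤ dist o j + dist j (σF j) := dist_triangle _ _ _
        have t3 : dist o j = distSet j Fstar hFstar := by
          rw [hdO' j, hjo, dist_comm]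
        have t4 : dist j (σF j) = distSet j F hF := (hdF' j).symm
        have t5 : dist j o = dist o j := dist_comm _ _
        linarith
      have hs1 := Finset.sum_le_sum hpt
      have hs2 : ∑ j ∈ (univ.filter (fun j => σO j = o)).filter
          (fun j => σF (σO j) = σF j),
          (2 * distSet j Fstar hFstar + (distSet j F hF - dist j o))
          = (∑ j ∈ (univ.filter (fun j => σO j = o)).filter
            (fun j => σF (σO j) = σF j), 2 * distSet j Fstar hFstar)
          + ∑ j ∈ (univ.filter (fun j => σO j = o)).filter
            (fun j => σF (σO j) = σF j), (distSet j F hF - dist j o) :=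
        Finset.sum_add_distrib
      have hadd := add_ineq o ((univ.filter (fun j => σO j = o)).filter
        (fun j => σF (σO j) = σF j))
      have hg : ∑ j ∈ (univ.filter (fun j => σO j = o)).filter
          (fun j => ¬ σF (σO j) = σF j), B j
          ≤ ∑ j ∈ (univ.filter (fun j => σO j = o)).filter
            (fun j => ¬ σF (σO j) = σF j), 2 * distSet j Fstar hFstar :=
        Finset.sum_le_sum (fun j hj =>
          hgood j (Finset.filter_subset _ _ hj) (mem_filter.mp hj).2)
      have hsplit2 := Finset.sum_filter_add_sum_filter_not
        (univ.filter (fun j => σO j = o)) (fun j => σF (σO j) = σF j)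
        (fun j => 2 * distSet j Fstar hFstar)
      linarith
  -- total client-side bound
  have totalB : ∑ j : V, B j ≤
      (∑ o ∈ Fstar.filter (fun o => ¬ τ (σF o) = o), fac o)
      + 2 * ∑ j : V, distSet j Fstar hFstar := by
    rw [← Finset.sum_fiberwise_of_maps_to (fun j (_ : j ∈ univ) => hσO j) B]
    have h1 : ∑ o ∈ Fstar, ∑ j ∈ univ.filter (fun j => σO j = o), B j ≤
        ∑ o ∈ Fstar, ((if τ (σF o) = o then 0 else fac o)
        + ∑ j ∈ univ.filter (fun j => σO j = o), 2 * distSet j Fstar hFstar) :=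
      Finset.sum_le_sum perfiber
    rw [Finset.sum_add_distrib] at h1
    have h2 : ∑ o ∈ Fstar, (if τ (σF o) = o then 0 else fac o)
        = ∑ o ∈ Fstar.filter (fun o => ¬ τ (σF o) = o), fac o := by
      rw [Finset.sum_filter]
      apply Finset.sum_congr rfl
      intro o _
      by_cases h : τ (σF o) = o
      · rw [if_pos h, if_neg (not_not_intro h)]
      · rw [if_neg h, if_pos h]
    have h3 : ∑ o ∈ Fstar, ∑ j ∈ univ.filter (fun j => σO j = o),
        2 * distSet j Fstar hFstar = ∑ j : V, 2 * distSet j Fstar hFstar :=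
      Finset.sum_fiberwise_of_maps_to (fun j _ => hσO j) _
    rw [h2, h3, ← Finset.mul_sum] at h1
    exact h1
  -- service cost bound from the open moves
  have lem1 : ∑ j : V, distSet j F hF ≤ (∑ o ∈ Fstar, fac o)
      + ∑ j : V, distSet j Fstar hFstar := by
    have h0 : ∑ j : V, (distSet j F hF - distSet j Fstar hFstar)
        ≤ ∑ o ∈ Fstar, fac o := by
      rw [← Finset.sum_fiberwise_of_maps_to (fun j (_ : j ∈ univ) => hσO j)
        (fun j => distSet j F hF - distSet j Fstar hFstar)]
      apply Finset.sum_le_sum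
      intro o ho
      have heq : ∑ j ∈ univ.filter (fun j => σO j = o),
          (distSet j F hF - distSet j Fstar hFstar)
          = ∑ j ∈ univ.filter (fun j => σO j = o), (distSet j F hF - dist j o) := by
        apply Finset.sum_congr rfl
        intro j hj
        have hjo : σO j = o := (mem_filter.mp hj).2
        rw [hdO' j, hjo]
      rw [heq]
      exact add_ineq o _
    rw [Finset.sum_sub_distrib] at h0
    linarith
  -- put everything together
  have hfstar_nonneg : 0 ≤ ∑ o ∈ Fstar, fac o :=
    Finset.sum_nonneg (fun o _ => hfac o)
  have hsplitF := Finset.sum_filter_add_sum_filter_not Fstar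
    (fun o => τ (σF o) = o) fac
  have hfacbound : ∑ s ∈ F, fac s ≤ (∑ o ∈ Fstar, fac o)
      + 2 * ∑ j : V, distSet j Fstar hFstar := by
    linarith [total_f, chosen_eq, totalB, hsplitF]
  constructor
  · simp only [UFL]
    linarith [hfacbound, lem1]
  · simp only [UFL]
    linarith [hfstar_nonneg]
end

section
/- Let (V,d) be a finite metric space with facility opening costs fac : V → ℝ_{≥0}, let k ≥ 1 be an integer, and let F ⊆ V be nonempty with |F| ≤ k. Suppose F is locally optimal for kUFL under the allowed moves: for every f' ∈ V with |F ∪ {f'}| ≤ k, kUFL(F ∪ {f'}) ≥ kUFL(F); for every r ∈ F with F \ {r} nonempty, kUFL(F \ {r}) ≥ kUFL(F); and for every r ∈ F and f' ∈ V, kUFL((F \ {r}) ∪ {f'}) ≥ kUFL(F). Then for every nonempty F* ⊆ V with |F*| ≤ k, kUFL(F) ≤ 2·fac(F*) + 5·Σ_{j ∈ V} d(j,F*) ≤ 5·kUFL(F*). -/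
open Finset

/-- The k-uncapacitated facility location cost of a nonempty facility set `F`:
`kUFL(F) = ∑_{f ∈ F} fac(f) + ∑_{j ∈ V} d(j,F)`. -/
noncomputable def kUFL {V : Type*} [MetricSpace V] [Fintype V] (fac : V → ℝ)
    (F : Finset V) (hF : F.Nonempty) : ℝ :=
  (∑ f ∈ F, fac f) + ∑ j : V, distSet j F hF

/-- At a local optimum for k-UFL under the allowed opening, closing, and
swapping moves, `kUFL(F) ≤ 2·fac(F*) + 5·∑_j d(j,F*) ≤ 5·kUFL(F*)` for every
feasible `F*`. -/
theorem kufl_local_opt_five {V : Type*} [MetricSpace V] [Fintype V] [DecidableEq V]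
    (fac : V → ℝ) (hfac : ∀ f : V, 0 ≤ fac f) (k : ℕ) (hk : 1 ≤ k)
    (F : Finset V) (hF : F.Nonempty) (hFk : F.card ≤ k)
    (hopen : ∀ f' : V, (insert f' F).card ≤ k →
      kUFL fac (insert f' F) (insert_nonempty _ _) ≥ kUFL fac F hF)
    (hclose : ∀ r ∈ F, ∀ hne : (F.erase r).Nonempty,
      kUFL fac (F.erase r) hne ≥ kUFL fac F hF)
    (hswap : ∀ r ∈ F, ∀ f' : V,
      kUFL fac (insert f' (F.erase r)) (insert_nonempty _ _) ≥ kUFL fac F hF) :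
    ∀ (Fstar : Finset V) (hFstar : Fstar.Nonempty), Fstar.card ≤ k →
      kUFL fac F hF ≤ 2 * (∑ f ∈ Fstar, fac f) + 5 * ∑ j : V, distSet j Fstar hFstar ∧
      2 * (∑ f ∈ Fstar, fac f) + 5 * ∑ j : V, distSet j Fstar hFstar ≤
        5 * kUFL fac Fstar hFstar := by
  intro Fstar hFstar hFsk
  classical
  -- nearest-point maps
  have hnpex : ∀ x : V, ∃ i, i ∈ F ∧ distSet x F hF = dist x i := by
    intro x; exact F.exists_mem_eq_inf' hF (fun f => dist x f)
  choose np hnpF hnpd using hnpex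
  have hnpsex : ∀ x : V, ∃ i, i ∈ Fstar ∧ distSet x Fstar hFstar = dist x i := by
    intro x; exact Fstar.exists_mem_eq_inf' hFstar (fun f => dist x f)
  choose nps hnpsF hnpsd using hnpsex
  set D : V → ℝ := fun j => distSet j F hF with hD
  set Ds : V → ℝ := fun j => distSet j Fstar hFstar with hDs
  have hD0 : ∀ j, 0 ≤ D j := fun j => le_inf' _ _ (fun f _ => dist_nonneg)
  have hDs0 : ∀ j, 0 ≤ Ds j := fun j => le_inf' _ _ (fun f _ => dist_nonneg)
  have hDle : ∀ (j f : V), f ∈ F → D j ≤ dist j f := fun j f hf => inf'_le _ hf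
  -- generic upper bound for kUFL of a set, given a routing
  have kufl_ub : ∀ (G : Finset V) (hG : G.Nonempty) (ρ : V → V), (∀ j, ρ j ∈ G) →
      kUFL fac G hG ≤ (∑ f ∈ G, fac f) + ∑ j : V, dist j (ρ j) := by
    intro G hG ρ hρ
    unfold kUFL
    gcongr with j _
    exact inf'_le _ (hρ j)
  have sum_insert_le' : ∀ (x : V) (G : Finset V),
      (∑ f ∈ insert x G, fac f) ≤ fac x + ∑ f ∈ G, fac f := by
    intro x G
    by_cases hx : x ∈ G
    · rw [Finset.insert_eq_self.2 hx]; linarith [hfac x]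
    · rw [Finset.sum_insert hx]
  have hkF : kUFL fac F hF = (∑ f ∈ F, fac f) + ∑ j : V, D j := rfl
  -- swap move bound
  have swapR : ∀ r, r ∈ F → ∀ (fs : V) (ρ : V → V), (∀ j, ρ j ∈ insert fs (F.erase r)) →
      0 ≤ fac fs - fac r + ∑ j : V, (dist j (ρ j) - D j) := by
    intro r hr fs ρ hρ
    have h1 := hswap r hr fs
    have h2 := kufl_ub _ (insert_nonempty _ _) ρ hρ
    have h3 : (∑ f ∈ insert fs (F.erase r), fac f) ≤ fac fs + ((∑ f ∈ F, fac f) - fac r) := by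
      have h4 := sum_insert_le' fs (F.erase r)
      rw [Finset.sum_erase_eq_sub hr] at h4
      linarith
    rw [Finset.sum_sub_distrib]
    have := le_trans (le_of_eq hkF.symm) (le_trans h1 h2)
    linarith
  -- open move bound
  have openR : F.card < k → ∀ (fs : V) (ρ : V → V), (∀ j, ρ j ∈ insert fs F) →
      0 ≤ fac fs + ∑ j : V, (dist j (ρ j) - D j) := by
    intro hc fs ρ hρ
    have h1 := hopen fs (le_trans (card_insert_le fs F) hc)
    have h2 := kufl_ub _ (insert_nonempty _ _) ρ hρ
    have h3 := sum_insert_le' fs F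
    rw [Finset.sum_sub_distrib]
    have := le_trans (le_of_eq hkF.symm) (le_trans h1 h2)
    linarith
  -- close move bound
  have closeR : ∀ r, r ∈ F → (F.erase r).Nonempty → ∀ (ρ : V → V), (∀ j, ρ j ∈ F.erase r) →
      0 ≤ - fac r + ∑ j : V, (dist j (ρ j) - D j) := by
    intro r hr hne ρ hρ
    have h1 := hclose r hr hne
    have h2 := kufl_ub _ hne ρ hρ
    have h3 : (∑ f ∈ F.erase r, fac f) = (∑ f ∈ F, fac f) - fac r :=
      Finset.sum_erase_eq_sub hr
    rw [Finset.sum_sub_distrib]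
    have := le_trans (le_of_eq hkF.symm) (le_trans h1 h2)
    linarith

  -- primary facilities
  set P : Finset V := Fstar.image np with hP
  have hPF : ∀ p ∈ P, p ∈ F := by
    intro p hp
    obtain ⟨fs, _, rfl⟩ := Finset.mem_image.1 hp
    exact hnpF fs
  have hPne : P.Nonempty := hFstar.image np
  -- choose for each primary its nearest captured optimal facility
  have htex : ∀ f : V, ∃ g : V, f ∈ P →
      g ∈ Fstar ∧ np g = f ∧ ∀ g' ∈ Fstar, np g' = f → dist f g ≤ dist f g' := by
    intro f
    by_cases hf : f ∈ P
    · obtain ⟨fs, hfs, hnpfs⟩ := Finset.mem_image.1 hf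
      have hTne : (Fstar.filter (fun g => np g = f)).Nonempty :=
        ⟨fs, Finset.mem_filter.2 ⟨hfs, hnpfs⟩⟩
      obtain ⟨g, hg, hmin⟩ := Finset.exists_min_image _ (fun g => dist f g) hTne
      rw [Finset.mem_filter] at hg
      exact ⟨g, fun _ => ⟨hg.1, hg.2, fun g' hg' hg'' =>
        hmin g' (Finset.mem_filter.2 ⟨hg', hg''⟩)⟩⟩
    · exact ⟨f, fun h => absurd h hf⟩
  choose t ht using htex
  have htFs : ∀ f ∈ P, t f ∈ Fstar := fun f hf => (ht f hf).1
  have htnp : ∀ f ∈ P, np (t f) = f := fun f hf => (ht f hf).2.1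
  have htmin : ∀ f ∈ P, ∀ g' ∈ Fstar, np g' = f → dist f (t f) ≤ dist f g' :=
    fun f hf => (ht f hf).2.2
  have tinj : Set.InjOn t ↑P := by
    intro a ha b hb hab
    rw [← htnp a ha, ← htnp b hb, hab]
  have himg : P.image t ⊆ Fstar := by
    intro x hx
    obtain ⟨f, hf, rfl⟩ := Finset.mem_image.1 hx
    exact htFs f hf
  set extras : Finset V := Fstar \ P.image t with hextras
  set NP : Finset V := F \ P with hNP
  -- A and B terms
  set Ater : V → ℝ := fun fs => ∑ j : V, (if nps j = fs then Ds j - D j else 0) with hAter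
  set Bter : V → ℝ := fun f => ∑ j : V, (if np j = f then 2 * Ds j else 0) with hBter
  have hBnn : ∀ f, 0 ≤ Bter f := by
    intro f
    apply Finset.sum_nonneg
    intro j _
    split
    · linarith [hDs0 j]
    · exact le_refl 0
  have hAsum : (∑ fs ∈ Fstar, Ater fs) = (∑ j : V, Ds j) - ∑ j : V, D j := by
    rw [hAter, Finset.sum_comm, ← Finset.sum_sub_distrib]
    apply Finset.sum_congr rfl
    intro j _
    rw [Finset.sum_ite_eq]
    simp [hnpsF j]
  have hBsum : (∑ f ∈ F, Bter f) = 2 * ∑ j : V, Ds j := by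
    rw [hBter, Finset.sum_comm, Finset.mul_sum]
    apply Finset.sum_congr rfl
    intro j _
    rw [Finset.sum_ite_eq]
    simp [hnpF j]

  have hnpd' : ∀ x : V, D x = dist x (np x) := hnpd
  have hnpsd' : ∀ x : V, Ds x = dist x (nps x) := hnpsd
  -- triangle-inequality routing bounds
  have reroute : ∀ j : V, dist j (np (nps j)) ≤ 2 * Ds j + D j := by
    intro j
    have h1 : dist j (np (nps j)) ≤ dist j (nps j) + dist (nps j) (np (nps j)) :=
      dist_triangle _ _ _
    have h2 : dist (nps j) (np (nps j)) ≤ dist (nps j) (np j) := by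
      rw [← hnpd' (nps j)]
      exact inf'_le _ (hnpF j)
    have h3 : dist (nps j) (np j) ≤ dist (nps j) j + dist j (np j) := dist_triangle _ _ _
    have h4 : dist j (nps j) = Ds j := (hnpsd' j).symm
    have h5 : dist (nps j) j = Ds j := by rw [dist_comm]; exact (hnpsd' j).symm
    have h6 : dist j (np j) = D j := (hnpd' j).symm
    linarith
  have tbound : ∀ (j f : V), f ∈ P → np j = f → np (nps j) = f →
      dist j (t f) ≤ 2 * D j + Ds j := by
    intro j f hf hj hcap
    have h1 : dist j (t f) ≤ dist j f + dist f (t f) := dist_triangle _ _ _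
    have h2 : dist f (t f) ≤ dist f (nps j) := htmin f hf (nps j) (hnpsF j) hcap
    have h3 : dist f (nps j) ≤ dist f j + dist j (nps j) := dist_triangle _ _ _
    have h4 : dist j f = D j := by rw [hnpd' j, hj]
    have h5 : dist f j = D j := by rw [dist_comm]; exact h4
    have h6 : dist j (nps j) = Ds j := (hnpsd' j).symm
    linarith
  -- the main swap inequality for each primary facility
  set w1 : V → V → ℝ := fun f j =>
    if nps j = t f then Ds j - D j
    else if np j = f then (if np (nps j) = f then D j + Ds j else 2 * Ds j) else 0 with hw1
  have W1 : ∀ f ∈ P, 0 ≤ fac (t f) - fac f + ∑ j : V, w1 f j := by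
    intro f hf
    have hfF := hPF f hf
    set ρ : V → V := fun j =>
      if nps j = t f then t f
      else if np j = f then (if np (nps j) = f then t f else np (nps j)) else np j with hρ
    have hmem : ∀ j, ρ j ∈ insert (t f) (F.erase f) := by
      intro j
      rw [hρ]
      dsimp only
      split_ifs with h1 h2 h3
      · exact mem_insert_self _ _
      · exact mem_insert_self _ _
      · exact mem_insert_of_mem (Finset.mem_erase.2 ⟨h3, hnpF _⟩)
      · exact mem_insert_of_mem (Finset.mem_erase.2 ⟨h2, hnpF _⟩)
    have hsw := swapR f hfF (t f) ρ hmem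
    have hb : ∑ j : V, (dist j (ρ j) - D j) ≤ ∑ j : V, w1 f j := by
      apply Finset.sum_le_sum
      intro j _
      rw [hρ, hw1]
      dsimp only
      split_ifs with h1 h2 h3
      · have hd : dist j (t f) = Ds j := by rw [← h1]; exact (hnpsd' j).symm
        linarith
      · have := tbound j f hf h2 h3
        linarith
      · have := reroute j
        linarith
      · have : dist j (np j) = D j := (hnpd' j).symm
        linarith
    linarith
  -- closing a non-primary facility
  have closeNP : ∀ f₀ ∈ NP, fac f₀ ≤ Bter f₀ := by
    intro f₀ hf₀
    rw [hNP, Finset.mem_sdiff] at hf₀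
    obtain ⟨hf₀F, hf₀P⟩ := hf₀
    obtain ⟨p, hp⟩ := hPne
    have hne : (F.erase f₀).Nonempty :=
      ⟨p, Finset.mem_erase.2 ⟨fun h => hf₀P (h ▸ hp), hPF p hp⟩⟩
    have hnpP : ∀ j : V, np (nps j) ∈ P := by
      intro j
      rw [hP]
      exact Finset.mem_image.2 ⟨nps j, hnpsF j, rfl⟩
    set ρ : V → V := fun j => if np j = f₀ then np (nps j) else np j with hρ
    have hmem : ∀ j, ρ j ∈ F.erase f₀ := by
      intro j
      rw [hρ]
      dsimp only
      split_ifs with h1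
      · exact Finset.mem_erase.2 ⟨fun h => hf₀P (h ▸ hnpP j), hnpF _⟩
      · exact Finset.mem_erase.2 ⟨h1, hnpF _⟩
    have hcl := closeR f₀ hf₀F hne ρ hmem
    have hb : ∑ j : V, (dist j (ρ j) - D j) ≤ Bter f₀ := by
      rw [hBter]
      apply Finset.sum_le_sum
      intro j _
      rw [hρ]
      dsimp only
      split_ifs with h1
      · have := reroute j
        linarith
      · have : dist j (np j) = D j := (hnpd' j).symm
        linarith
    linarith

  have hPsub : P ⊆ F := fun p hp => hPF p hp
  -- restricted reassignment gains
  set R : V → ℝ := fun fs =>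
    ∑ j : V, (if np j = np fs ∧ nps j = fs then Ds j - D j else 0) with hR
  set Ef : V → Finset V := fun f => (Fstar.filter (fun fs => np fs = f)).erase (t f) with hEf
  have hEfgroup : ∀ f ∈ P, ∀ j : V,
      (∑ fs ∈ Ef f, (if np j = np fs ∧ nps j = fs then Ds j - D j else 0))
        = if nps j ∈ Ef f ∧ np j = f then Ds j - D j else 0 := by
    intro f hf j
    by_cases h : nps j ∈ Ef f
    · have hnpf : np (nps j) = f := by
        have h2 := Finset.mem_of_mem_erase h
        exact (Finset.mem_filter.1 h2).2
      rw [Finset.sum_eq_single_of_mem (nps j) h]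
      · by_cases h2 : np j = f
        · rw [if_pos ⟨by rw [hnpf, h2], rfl⟩, if_pos ⟨h, h2⟩]
        · rw [if_neg, if_neg]
          · rintro ⟨-, hh⟩; exact h2 hh
          · rintro ⟨hh, -⟩; exact h2 (by rw [hh, hnpf])
      · intro fs hfs hne
        rw [if_neg]
        rintro ⟨-, h2⟩
        exact hne h2.symm
    · rw [if_neg (by rintro ⟨h1, -⟩; exact h h1)]
      apply Finset.sum_eq_zero
      intro fs hfs
      rw [if_neg]
      rintro ⟨-, h2⟩
      exact h (h2 ▸ hfs)
  -- per-primary combined inequality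
  have HcP : ∀ f ∈ P, (∑ j : V, w1 f j) + (∑ fs ∈ Ef f, R fs) ≤ Ater (t f) + Bter f := by
    intro f hf
    have hre : (∑ fs ∈ Ef f, R fs)
        = ∑ j : V, (if nps j ∈ Ef f ∧ np j = f then Ds j - D j else 0) := by
      simp only [hR]
      rw [Finset.sum_comm]
      exact Finset.sum_congr rfl fun j _ => hEfgroup f hf j
    have hAB : Ater (t f) + Bter f = ∑ j : V,
        ((if nps j = t f then Ds j - D j else 0) + (if np j = f then 2 * Ds j else 0)) := by
      simp only [hAter, hBter]
      rw [← Finset.sum_add_distrib]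
    rw [hre, hAB, ← Finset.sum_add_distrib]
    apply Finset.sum_le_sum
    intro j _
    simp only [hw1]
    by_cases h1 : nps j = t f
    · rw [if_pos h1, if_pos h1, if_neg (by rintro ⟨hm, -⟩; exact (Finset.mem_erase.1 hm).1 h1)]
      have : (0:ℝ) ≤ if np j = f then 2 * Ds j else 0 := by
        split
        · linarith [hDs0 j]
        · exact le_refl 0
      linarith
    · rw [if_neg h1, if_neg h1]
      by_cases h2 : np j = f
      · rw [if_pos h2, if_pos h2]
        by_cases h3 : np (nps j) = f
        · have hmem : nps j ∈ Ef f :=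
            Finset.mem_erase.2 ⟨h1, Finset.mem_filter.2 ⟨hnpsF j, h3⟩⟩
          rw [if_pos h3, if_pos ⟨hmem, h2⟩]
          linarith
        · rw [if_neg h3, if_neg (by
            rintro ⟨hm, -⟩
            exact h3 (Finset.mem_filter.1 (Finset.mem_of_mem_erase hm)).2)]
          linarith
      · have hnot : ¬(nps j ∈ Ef f ∧ np j = f) := fun h => h2 h.2
        simp only [if_neg h2, if_neg hnot]
        linarith
  -- regrouping the extras by their primary facility
  have hfib : ∀ G : V → ℝ, (∑ fs ∈ extras, G fs) = ∑ f ∈ P, ∑ fs ∈ Ef f, G fs := by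
    intro G
    have hmap : ∀ fs ∈ extras, np fs ∈ P := by
      intro fs hfs
      rw [hP]
      exact Finset.mem_image.2 ⟨fs, (Finset.mem_sdiff.1 hfs).1, rfl⟩
    rw [← Finset.sum_fiberwise_of_maps_to hmap G]
    apply Finset.sum_congr rfl
    intro f hf
    apply Finset.sum_congr ?_ (fun _ _ => rfl)
    ext fs
    simp only [Finset.mem_filter, hextras, Finset.mem_sdiff, hEf, Finset.mem_erase]
    constructor
    · rintro ⟨⟨hfsFs, hfsnim⟩, hnpfs⟩
      refine ⟨fun he => hfsnim ?_, hfsFs, hnpfs⟩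
      rw [he]
      exact Finset.mem_image.2 ⟨f, hf, rfl⟩
    · rintro ⟨hne, hfsFs, hnpfs⟩
      refine ⟨⟨hfsFs, fun him => ?_⟩, hnpfs⟩
      obtain ⟨f', hf', rfl⟩ := Finset.mem_image.1 him
      have : f' = f := by rw [← htnp f' hf', hnpfs]
      exact hne (by rw [this])
  -- splitting sums over Fstar and F
  have hsplit : ∀ G : V → ℝ, (∑ f ∈ P, G (t f)) + (∑ fs ∈ extras, G fs) = ∑ fs ∈ Fstar, G fs := by
    intro G
    have h1 : (∑ f ∈ P, G (t f)) = ∑ x ∈ P.image t, G x :=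
      (Finset.sum_image (fun x hx y hy h => tinj hx hy h)).symm
    rw [h1, add_comm]
    exact Finset.sum_sdiff himg
  have hFsplit : ∀ G : V → ℝ, (∑ f ∈ P, G f) + (∑ f ∈ NP, G f) = ∑ f ∈ F, G f := by
    intro G
    rw [add_comm]
    exact Finset.sum_sdiff hPsub

  -- the "extra" optimal facilities can be opened (directly, or via a swap
  -- with a distinct non-primary facility when |F| = k)
  obtain ⟨pen, hpen2, hpen3, hpensum⟩ :
      ∃ pen : V → ℝ,
        (∀ fs ∈ extras, 0 ≤ fac fs + pen fs + R fs) ∧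
        (∀ fs ∈ extras, 0 ≤ fac fs + pen fs + Ater fs) ∧
        (2 * ∑ fs ∈ extras, pen fs ≤ -(∑ f ∈ NP, fac f) + 2 * ∑ f ∈ NP, Bter f) := by
    by_cases hc : F.card < k
    · refine ⟨fun _ => 0, ?_, ?_, ?_⟩
      · intro fs hfs
        set ρ : V → V := fun j => if np j = np fs ∧ nps j = fs then fs else np j with hρ
        have hmem : ∀ j, ρ j ∈ insert fs F := by
          intro j
          rw [hρ]; dsimp only
          split_ifs with h1
          · exact mem_insert_self _ _
          · exact mem_insert_of_mem (hnpF j)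
        have hop := openR hc fs ρ hmem
        have hb : ∑ j : V, (dist j (ρ j) - D j) ≤ R fs := by
          simp only [hR]
          apply Finset.sum_le_sum
          intro j _
          rw [hρ]; dsimp only
          split_ifs with h1
          · have : dist j fs = Ds j := by rw [← h1.2]; exact (hnpsd' j).symm
            linarith
          · have : dist j (np j) = D j := (hnpd' j).symm
            linarith
        dsimp only
        linarith
      · intro fs hfs
        set ρ : V → V := fun j => if nps j = fs then fs else np j with hρ
        have hmem : ∀ j, ρ j ∈ insert fs F := by
          intro j
          rw [hρ]; dsimp only
          split_ifs with h1
          · exact mem_insert_self _ _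
          · exact mem_insert_of_mem (hnpF j)
        have hop := openR hc fs ρ hmem
        have hb : ∑ j : V, (dist j (ρ j) - D j) ≤ Ater fs := by
          simp only [hAter]
          apply Finset.sum_le_sum
          intro j _
          rw [hρ]; dsimp only
          split_ifs with h1
          · have : dist j fs = Ds j := by rw [← h1]; exact (hnpsd' j).symm
            linarith
          · have : dist j (np j) = D j := (hnpd' j).symm
            linarith
        dsimp only
        linarith
      · have h1 : (∑ f ∈ NP, fac f) ≤ ∑ f ∈ NP, Bter f :=
          Finset.sum_le_sum (fun f hf => closeNP f hf)
        have h2 : (0:ℝ) ≤ ∑ f ∈ NP, Bter f := Finset.sum_nonneg (fun f _ => hBnn f)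
        simp only [Finset.sum_const_zero, mul_zero]
        linarith
    · -- |F| = k : swap in each extra with a distinct non-primary facility
      have hcardeq : F.card = k := le_antisymm hFk (not_lt.1 hc)
      have hcard4 : extras.card ≤ NP.card := by
        have h1 : extras.card = Fstar.card - (P.image t).card := Finset.card_sdiff_of_subset himg
        have h2 : (P.image t).card = P.card := Finset.card_image_of_injOn tinj
        have h3 : NP.card = F.card - P.card := Finset.card_sdiff_of_subset hPsub
        rw [h1, h2, h3]
        exact Nat.sub_le_sub_right (hFsk.trans (le_of_eq hcardeq.symm)) _
      have hVne : Nonempty V := ⟨hF.choose⟩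
      obtain ⟨φ, hφmem, hφinj⟩ :=
        Set.Finite.exists_injOn_of_encard_le (extras.finite_toSet)
          (by
            rw [Set.encard_coe_eq_coe_finsetCard, Set.encard_coe_eq_coe_finsetCard]
            exact_mod_cast hcard4 : (↑extras : Set V).encard ≤ (↑NP : Set V).encard)
      have hφNP : ∀ fs ∈ extras, φ fs ∈ NP := fun fs hfs => hφmem hfs
      have hφF : ∀ fs ∈ extras, φ fs ∈ F := fun fs hfs =>
        (Finset.mem_sdiff.1 (hφNP fs hfs)).1
      have hφnP : ∀ fs ∈ extras, φ fs ∉ P := fun fs hfs =>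
        (Finset.mem_sdiff.1 (hφNP fs hfs)).2
      have hnpP : ∀ j : V, np (nps j) ∈ P := by
        intro j
        rw [hP]
        exact Finset.mem_image.2 ⟨nps j, hnpsF j, rfl⟩
      have hnpP' : ∀ j : V, np j ∈ P → ∀ fs ∈ extras, np j ≠ φ fs :=
        fun j hj fs hfs h => hφnP fs hfs (h ▸ hj)
      refine ⟨fun fs => -fac (φ fs) + Bter (φ fs), ?_, ?_, ?_⟩
      · intro fs hfs
        set ρ : V → V := fun j =>
          if np j = np fs ∧ nps j = fs then fs
          else if np j = φ fs then np (nps j) else np j with hρ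
        have hmem : ∀ j, ρ j ∈ insert fs (F.erase (φ fs)) := by
          intro j
          rw [hρ]; dsimp only
          split_ifs with h1 h2
          · exact mem_insert_self _ _
          · exact mem_insert_of_mem (Finset.mem_erase.2
              ⟨fun h => hφnP fs hfs (h ▸ hnpP j), hnpF _⟩)
          · exact mem_insert_of_mem (Finset.mem_erase.2 ⟨h2, hnpF _⟩)
        have hsw := swapR (φ fs) (hφF fs hfs) fs ρ hmem
        have hb : ∑ j : V, (dist j (ρ j) - D j)
            ≤ R fs + Bter (φ fs) := by
          have : R fs + Bter (φ fs) = ∑ j : V,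
              ((if np j = np fs ∧ nps j = fs then Ds j - D j else 0)
                + (if np j = φ fs then 2 * Ds j else 0)) := by
            simp only [hR, hBter]
            rw [← Finset.sum_add_distrib]
          rw [this]
          apply Finset.sum_le_sum
          intro j _
          have h0 : (0:ℝ) ≤ if np j = φ fs then 2 * Ds j else 0 := by
            by_cases h2 : np j = φ fs
            · rw [if_pos h2]; linarith [hDs0 j]
            · rw [if_neg h2]
          by_cases h1 : np j = np fs ∧ nps j = fs
          · have hρj : ρ j = fs := by rw [hρ]; dsimp only; rw [if_pos h1]
            have hd : dist j fs = Ds j := by rw [← h1.2]; exact (hnpsd' j).symm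
            rw [hρj, if_pos h1]
            linarith
          · rw [if_neg h1]
            by_cases h2 : np j = φ fs
            · have hρj : ρ j = np (nps j) := by
                rw [hρ]; dsimp only; rw [if_neg h1, if_pos h2]
              rw [hρj, if_pos h2]
              have := reroute j
              linarith
            · have hρj : ρ j = np j := by
                rw [hρ]; dsimp only; rw [if_neg h1, if_neg h2]
              rw [hρj, if_neg h2]
              have : dist j (np j) = D j := (hnpd' j).symm
              linarith
        dsimp only
        linarith
      · intro fs hfs
        set ρ : V → V := fun j =>
          if nps j = fs then fs
          else if np j = φ fs then np (nps j) else np j with hρ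
        have hmem : ∀ j, ρ j ∈ insert fs (F.erase (φ fs)) := by
          intro j
          rw [hρ]; dsimp only
          split_ifs with h1 h2
          · exact mem_insert_self _ _
          · exact mem_insert_of_mem (Finset.mem_erase.2
              ⟨fun h => hφnP fs hfs (h ▸ hnpP j), hnpF _⟩)
          · exact mem_insert_of_mem (Finset.mem_erase.2 ⟨h2, hnpF _⟩)
        have hsw := swapR (φ fs) (hφF fs hfs) fs ρ hmem
        have hb : ∑ j : V, (dist j (ρ j) - D j)
            ≤ Ater fs + Bter (φ fs) := by
          have : Ater fs + Bter (φ fs) = ∑ j : V,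
              ((if nps j = fs then Ds j - D j else 0)
                + (if np j = φ fs then 2 * Ds j else 0)) := by
            simp only [hAter, hBter]
            rw [← Finset.sum_add_distrib]
          rw [this]
          apply Finset.sum_le_sum
          intro j _
          have h0 : (0:ℝ) ≤ if np j = φ fs then 2 * Ds j else 0 := by
            by_cases h2 : np j = φ fs
            · rw [if_pos h2]; linarith [hDs0 j]
            · rw [if_neg h2]
          by_cases h1 : nps j = fs
          · have hρj : ρ j = fs := by rw [hρ]; dsimp only; rw [if_pos h1]
            have hd : dist j fs = Ds j := by rw [← h1]; exact (hnpsd' j).symm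
            rw [hρj, if_pos h1]
            linarith
          · rw [if_neg h1]
            by_cases h2 : np j = φ fs
            · have hρj : ρ j = np (nps j) := by
                rw [hρ]; dsimp only; rw [if_neg h1, if_pos h2]
              rw [hρj, if_pos h2]
              have := reroute j
              linarith
            · have hρj : ρ j = np j := by
                rw [hρ]; dsimp only; rw [if_neg h1, if_neg h2]
              rw [hρj, if_neg h2]
              have : dist j (np j) = D j := (hnpd' j).symm
              linarith
        dsimp only
        linarith
      · -- the sum over the penalties
        have himφ : extras.image φ ⊆ NP := by
          intro x hx
          obtain ⟨fs, hfs, rfl⟩ := Finset.mem_image.1 hx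
          exact hφNP fs hfs
        have hsum1 : ∀ G : V → ℝ,
            (∑ fs ∈ extras, G (φ fs)) = ∑ x ∈ extras.image φ, G x :=
          fun G => (Finset.sum_image (fun x hx y hy h => hφinj hx hy h)).symm
        have hsum2 : ∀ G : V → ℝ,
            (∑ x ∈ NP \ extras.image φ, G x) + (∑ x ∈ extras.image φ, G x)
              = ∑ x ∈ NP, G x := fun G => Finset.sum_sdiff himφ
        have hfa := hsum2 fac
        have hfb := hsum2 Bter
        have hfa1 := hsum1 fac
        have hfb1 := hsum1 Bter
        have h1 : (∑ x ∈ NP \ extras.image φ, fac x) ≤ ∑ x ∈ NP \ extras.image φ, Bter x :=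
          Finset.sum_le_sum (fun x hx => closeNP x (Finset.mem_sdiff.1 hx).1)
        have h2 : (0:ℝ) ≤ ∑ x ∈ NP \ extras.image φ, Bter x :=
          Finset.sum_nonneg (fun x _ => hBnn x)
        have h3 : (0:ℝ) ≤ ∑ x ∈ extras.image φ, fac x :=
          Finset.sum_nonneg (fun x _ => hfac x)
        have hexp : (∑ fs ∈ extras, (-fac (φ fs) + Bter (φ fs)))
            = -(∑ fs ∈ extras, fac (φ fs)) + ∑ fs ∈ extras, Bter (φ fs) := by
          rw [Finset.sum_add_distrib, Finset.sum_neg_distrib]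
        rw [hexp, hfa1, hfb1]
        linarith

  -- final assembly: sum all the move inequalities
  have S1 : (0:ℝ) ≤ ∑ f ∈ P, (fac (t f) - fac f + ∑ j : V, w1 f j) :=
    Finset.sum_nonneg (fun f hf => W1 f hf)
  have S2 : (0:ℝ) ≤ ∑ fs ∈ extras, (fac fs + pen fs + R fs) :=
    Finset.sum_nonneg (fun fs hfs => hpen2 fs hfs)
  have S3 : (0:ℝ) ≤ ∑ fs ∈ extras, (fac fs + pen fs + Ater fs) :=
    Finset.sum_nonneg (fun fs hfs => hpen3 fs hfs)
  have E1 : (∑ f ∈ P, (fac (t f) - fac f + ∑ j : V, w1 f j))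
      = (∑ f ∈ P, fac (t f)) - (∑ f ∈ P, fac f) + ∑ f ∈ P, ∑ j : V, w1 f j := by
    rw [Finset.sum_add_distrib, Finset.sum_sub_distrib]
  have E2 : (∑ fs ∈ extras, (fac fs + pen fs + R fs))
      = (∑ fs ∈ extras, fac fs) + (∑ fs ∈ extras, pen fs) + ∑ fs ∈ extras, R fs := by
    rw [Finset.sum_add_distrib, Finset.sum_add_distrib]
  have E3 : (∑ fs ∈ extras, (fac fs + pen fs + Ater fs))
      = (∑ fs ∈ extras, fac fs) + (∑ fs ∈ extras, pen fs) + ∑ fs ∈ extras, Ater fs := by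
    rw [Finset.sum_add_distrib, Finset.sum_add_distrib]
  have F5 : (∑ f ∈ P, ∑ j : V, w1 f j) + (∑ fs ∈ extras, R fs)
      ≤ (∑ f ∈ P, Ater (t f)) + ∑ f ∈ P, Bter f := by
    rw [hfib R, ← Finset.sum_add_distrib, ← Finset.sum_add_distrib]
    exact Finset.sum_le_sum fun f hf => HcP f hf
  have F6 := hsplit fac
  have F7 := hsplit Ater
  have F8 := hFsplit fac
  have F9 := hFsplit Bter
  have F10 : (∑ fs ∈ extras, fac fs) ≤ ∑ fs ∈ Fstar, fac fs :=
    Finset.sum_le_sum_of_subset_of_nonneg Finset.sdiff_subset (fun x _ _ => hfac x)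
  have F11 : (0:ℝ) ≤ ∑ f ∈ P, Bter f := Finset.sum_nonneg fun f _ => hBnn f
  have F12 : (0:ℝ) ≤ ∑ f ∈ NP, Bter f := Finset.sum_nonneg fun f _ => hBnn f
  have F13 : (0:ℝ) ≤ ∑ f ∈ Fstar, fac f := Finset.sum_nonneg fun f _ => hfac f
  rw [E1] at S1
  rw [E2] at S2
  rw [E3] at S3
  have hmain : (∑ f ∈ F, fac f) + (∑ j : V, D j)
      ≤ 2 * (∑ f ∈ Fstar, fac f) + 5 * ∑ j : V, Ds j := by
    linarith [hAsum, hBsum]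
  have hkS : kUFL fac Fstar hFstar = (∑ f ∈ Fstar, fac f) + ∑ j : V, Ds j := rfl
  constructor
  · rw [hkF]
    exact hmain
  · rw [hkS]
    linarith
end
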